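/- Let G be a connected graph on n₀ vertices without a triangle-factor, such that there exists an edge e (not in G, with both endpoints in V(G)) whose addition makes G + e have a triangle-factor with |E(G)| + 1 = (4/3)·n₀ − 1. Then this edge e is unique: there is at most one such edge with both endpoints in V(G). -/

import Mathlib

/-!
Let `P` be a triangle factor of `H = G + ab`. The triangles of `P` account for `3|P|` edges of
`H`, so the edge count leaves only `|P| - 1` edges between distinct triangles. Since `H` is
connected, contracting every triangle of `P` therefore yields a tree, and no two edges of `H` join
the same pair of triangles; hence every triangle of `H` belongs to `P`.

Now let `P'` be a triangle factor of `G + a'b'`. As `G` has no triangle factor, `a'b'` lies in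
some `K ∈ P'`. Every other triangle of `P'` is a triangle of `G ⊆ H`, hence lies in `P`, and then
so does `K`. So `a'b'` is an edge of `H` that is not in `G`, that is, `a'b' = ab`.
-/

open SimpleGraph Finset

def IsTriangleFactor {V : Type*} [DecidableEq V] (G : SimpleGraph V) (P : Finset (Finset V)) : Prop :=
  (∀ t ∈ P, G.IsNClique 3 t) ∧ (∀ v : V, ∃! t, t ∈ P ∧ v ∈ t)

theorem Finset.card_filter_not_isDiag_sym2 {α : Type*} [DecidableEq α] (s : Finset α) :
    #(s.sym2.filter fun e => ¬ e.IsDiag) = (#s).choose 2 := by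
  have hdiag : s.sym2.filter (fun e => e.IsDiag) = s.image Sym2.diag := by
    ext e
    induction e using Sym2.ind with
    | _ x y =>
      simp only [mem_filter, mk_mem_sym2_iff, Sym2.mk_isDiag_iff, mem_image, Sym2.diag,
        Sym2.eq_iff]
      grind
  have hsplit := card_filter_add_card_filter_not (s := s.sym2) (p := fun e => e.IsDiag)
  have hchoose : (#s + 1).choose 2 = #s + (#s).choose 2 := by
    simp [Nat.choose_succ_succ]
  rw [hdiag, card_image_of_injective _ Sym2.diag_injective, card_sym2, hchoose] at hsplit
  omega

namespace SimpleGraph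

variable {V W : Type*} {G : SimpleGraph V}

theorem Connected.map_of_surjective {f : V → W} (hG : G.Connected) (hf : f.Surjective) :
    (G.map f).Connected := by
  have : Nonempty W := hG.nonempty.map f
  have hreach : ∀ {x y}, G.Reachable x y → (G.map f).Reachable (f x) (f y) := by
    rintro x y ⟨p⟩
    induction p with
    | nil => rfl
    | @cons u v _ huv _ ih =>
      by_cases hfuv : f u = f v
      · rwa [hfuv]
      · exact (map_adj_apply' huv hfuv).reachable.trans ih
  refine Connected.mk fun u w => ?_
  obtain ⟨x, rfl⟩ := hf u
  obtain ⟨y, rfl⟩ := hf w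
  exact hreach (hG x y)

theorem edgeFinset_map_eq_image [DecidableEq W] [Fintype G.edgeSet] (f : V → W)
    [Fintype (G.map f).edgeSet] :
    (G.map f).edgeFinset =
      (G.edgeFinset.filter fun e => ¬ (e.map f).IsDiag).image (Sym2.map f) := by
  ext e
  induction e using Sym2.ind with
  | _ u w =>
    simp only [mem_edgeFinset, mem_edgeSet, map_adj', mem_image, mem_filter, Sym2.exists,
      Sym2.map_mk, Sym2.mk_isDiag_iff, Sym2.eq_iff]
    grind [Adj.symm]

theorem IsNClique.of_sup_edge_of_notMem [DecidableEq V] {v w : V} {t : Finset V} {n : ℕ}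
    (hc : (G ⊔ edge v w).IsNClique n t) (hv : v ∉ t) : G.IsNClique n t := by
  have ht : (t : Set V) \ {v} = t := sdiff_eq_left.mpr <| Set.disjoint_singleton_right.mpr hv
  exact ⟨ht ▸ hc.1.sdiff_of_sup_edge, hc.2⟩

theorem IsAcyclic.eq_of_isNClique_map {f : V → W} (hacyc : (G.map f).IsAcyclic)
    (hinj : Set.InjOn (Sym2.map f) {e ∈ G.edgeSet | ¬ (e.map f).IsDiag}) {x y z : V}
    (hxy : G.Adj x y) (hxz : G.Adj x z) (hyz : G.Adj y z) : f x = f y ∧ f x = f z := by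
  classical
  -- Two edges from one fibre to a vertex outside it would be parallel in the quotient.
  have hfibre : ∀ {u v w : V}, G.Adj u w → G.Adj v w → u ≠ v → f u = f v → f u = f w := by
    intro u v w huw hvw huv hfuv
    by_contra hfuw
    have hfvw : f v ≠ f w := hfuv ▸ hfuw
    have h := hinj (x₁ := s(u, w)) (x₂ := s(v, w)) ⟨huw, by simpa using hfuw⟩
      ⟨hvw, by simpa using hfvw⟩ (by simp [hfuv])
    rw [Sym2.eq_iff] at h
    grind [Adj.ne]
  by_cases h1 : f x = f y
  · exact ⟨h1, hfibre hxz hyz hxy.ne h1⟩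
  have h2 : f x ≠ f z := fun h => h1 (hfibre hxy hyz.symm hxz.ne h)
  have h3 : f y ≠ f z := fun h => h1 (hfibre hxy.symm hxz.symm hyz.ne h).symm
  exact absurd (is3Clique_triple_iff.2 ⟨map_adj_apply' hxy h1, map_adj_apply' hxz h2,
    map_adj_apply' hyz h3⟩) (hacyc.cliqueFree le_rfl _)

end SimpleGraph

namespace IsTriangleFactor

variable {V : Type*} [DecidableEq V] {G : SimpleGraph V} {P : Finset (Finset V)}

theorem eq_of_mem (hP : IsTriangleFactor G P) {v : V} {t₁ t₂ : Finset V} (h₁ : t₁ ∈ P)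
    (h₂ : t₂ ∈ P) (hv₁ : v ∈ t₁) (hv₂ : v ∈ t₂) : t₁ = t₂ :=
  (hP.2 v).unique ⟨h₁, hv₁⟩ ⟨h₂, hv₂⟩

theorem card_of_mem (hP : IsTriangleFactor G P) {t : Finset V} (ht : t ∈ P) : #t = 3 :=
  (hP.1 t ht).2

noncomputable def part (hP : IsTriangleFactor G P) (v : V) : P :=
  ⟨(hP.2 v).exists.choose, (hP.2 v).exists.choose_spec.1⟩

theorem mem_part (hP : IsTriangleFactor G P) (v : V) : v ∈ (hP.part v : Finset V) :=
  (hP.2 v).exists.choose_spec.2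

theorem part_eq (hP : IsTriangleFactor G P) {v : V} {t : P} (hv : v ∈ (t : Finset V)) :
    hP.part v = t :=
  Subtype.ext (hP.eq_of_mem (hP.part v).2 t.2 (hP.mem_part v) hv)

theorem part_surjective (hP : IsTriangleFactor G P) : Function.Surjective hP.part := fun t => by
  obtain ⟨v, hv⟩ := card_pos.1 (hP.card_of_mem t.2 ▸ three_pos : 0 < #(t : Finset V))
  exact ⟨v, hP.part_eq hv⟩

theorem card_eq [Fintype V] (hP : IsTriangleFactor G P) : Fintype.card V = 3 * #P := by
  have hfibre : ∀ t : P, Fintype.card {v // hP.part v = t} = 3 := fun t => by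
    rw [Fintype.card_subtype, ← hP.card_of_mem t.2]
    congr 1
    ext v
    simp only [mem_filter, mem_univ, true_and]
    exact ⟨fun h => h ▸ hP.mem_part v, hP.part_eq⟩
  rw [Fintype.card_congr (Equiv.sigmaFiberEquiv hP.part).symm, Fintype.card_sigma]
  simp [hfibre, mul_comm]

theorem three_mul_card_add_card_filter_le [Fintype G.edgeSet] (hP : IsTriangleFactor G P) :
    3 * #P + #(G.edgeFinset.filter fun e => ¬ (e.map hP.part).IsDiag) ≤ #G.edgeFinset := by
  have hinside : P.biUnion (fun t => t.sym2.filter fun e => ¬ e.IsDiag) ⊆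
      G.edgeFinset.filter fun e => (e.map hP.part).IsDiag := by
    intro e
    induction e using Sym2.ind with
    | _ x y =>
      simp only [mem_biUnion, mem_filter, mk_mem_sym2_iff, Sym2.mk_isDiag_iff, mem_edgeFinset,
        mem_edgeSet, Sym2.map_mk]
      rintro ⟨t, ht, ⟨hx, hy⟩, hxy⟩
      have hpart : ∀ {v}, v ∈ t → hP.part v = ⟨t, ht⟩ := fun hv => hP.part_eq hv
      exact ⟨(hP.1 t ht).1 hx hy hxy, by rw [hpart hx, hpart hy]⟩
  have hcard : #(P.biUnion fun t => t.sym2.filter fun e => ¬ e.IsDiag) = 3 * #P := by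
    rw [card_biUnion]
    · rw [sum_congr rfl fun t ht => by rw [card_filter_not_isDiag_sym2, hP.card_of_mem ht]]
      simp [mul_comm]
    · refine fun t₁ h₁ t₂ h₂ hne => disjoint_left.2 fun e he₁ he₂ => hne ?_
      rw [mem_filter, mem_sym2_iff] at he₁ he₂
      exact hP.eq_of_mem h₁ h₂ (he₁.1 _ (Sym2.out_fst_mem e)) (he₂.1 _ (Sym2.out_fst_mem e))
  have hsplit := card_filter_add_card_filter_not (s := G.edgeFinset)
    (p := fun e => (e.map hP.part).IsDiag)
  have := card_le_card hinside
  omega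

theorem mem_of_isNClique [Fintype G.edgeSet] (hP : IsTriangleFactor G P)
    (hG : G.Connected) (hE : #G.edgeFinset + 1 = 4 * #P) {K : Finset V}
    (hK : G.IsNClique 3 K) : K ∈ P := by
  classical
  set Q := G.map hP.part
  set cross := G.edgeFinset.filter fun e => ¬ (e.map hP.part).IsDiag
  have hQ : Q.Connected := hG.map_of_surjective hP.part_surjective
  have hcross : 3 * #P + #cross ≤ #G.edgeFinset := hP.three_mul_card_add_card_filter_le
  have hQE : Nat.card Q.edgeSet = #(cross.image (Sym2.map hP.part)) := by
    rw [← edgeFinset_map_eq_image, edgeFinset_card, Nat.card_eq_fintype_card]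
  have hQcard := hQ.card_vert_le_card_edgeSet_add_one
  rw [hQE, Nat.card_eq_finsetCard] at hQcard
  have hle := card_image_le (s := cross) (f := Sym2.map hP.part)
  -- The at most `#P - 1` cross edges must still connect the `#P` vertices of `Q`.
  have hinj : Set.InjOn (Sym2.map hP.part) cross := injOn_of_card_image_eq (by omega)
  have htree : Q.IsTree := isTree_iff_connected_and_card.2 ⟨hQ, by
    rw [hQE, Nat.card_eq_finsetCard]; omega⟩
  obtain ⟨x, y, z, hxy, hxz, hyz, rfl⟩ := card_eq_three.1 hK.2
  obtain ⟨hxy', hxz'⟩ := htree.isAcyclic.eq_of_isNClique_map (by simpa [cross] using hinj)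
    (hK.1 (by simp) (by simp) hxy) (hK.1 (by simp) (by simp) hxz) (hK.1 (by simp) (by simp) hyz)
  have hsub : {x, y, z} ⊆ (hP.part x : Finset V) := by
    simp only [insert_subset_iff, singleton_subset_iff]
    exact ⟨hP.mem_part x, hxy' ▸ hP.mem_part y, hxz' ▸ hP.mem_part z⟩
  rw [eq_of_subset_of_card_le hsub (by rw [hP.card_of_mem (hP.part x).2, hK.2])]
  exact (hP.part x).2

theorem mem_of_forall_ne_mem {G' : SimpleGraph V} {P' : Finset (Finset V)}
    (hP : IsTriangleFactor G P) (hP' : IsTriangleFactor G' P') {K : Finset V} (hK : K ∈ P')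
    (hrest : ∀ t ∈ P', t ≠ K → t ∈ P) : K ∈ P := by
  obtain ⟨a, ha⟩ := card_pos.1 (hP'.card_of_mem hK ▸ three_pos : 0 < #K)
  set S := (hP.part a : Finset V)
  have hsub : S ⊆ K := fun v hv => by
    obtain ⟨t, ⟨ht, hvt⟩, -⟩ := hP'.2 v
    by_cases htK : t = K
    · exact htK ▸ hvt
    have htS : t = S := hP.eq_of_mem (hrest t ht htK) (hP.part a).2 hvt hv
    exact absurd (hP'.eq_of_mem ht hK (htS ▸ hP.mem_part a) ha) htK
  rw [← eq_of_subset_of_card_le hsub (by rw [hP'.card_of_mem hK, hP.card_of_mem (hP.part a).2])]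
  exact (hP.part a).2

end IsTriangleFactor

theorem stmt6 {V : Type*} [Fintype V] [DecidableEq V] (G : SimpleGraph V) [DecidableRel G.Adj]
    (n₀ : ℕ) (hn : Fintype.card V = n₀) (hconn : G.Connected)
    (hnoTF : ¬ ∃ P, IsTriangleFactor G P)
    (hcount : 3 * (G.edgeFinset.card + 1) + 3 = 4 * n₀)
    (a b a' b' : V)
    (hab : a ≠ b) (hnadj : ¬ G.Adj a b)
    (hab' : a' ≠ b') (hnadj' : ¬ G.Adj a' b')
    (hTF : ∃ P, IsTriangleFactor (G ⊔ SimpleGraph.fromEdgeSet {s(a, b)}) P)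
    (hTF' : ∃ P, IsTriangleFactor (G ⊔ SimpleGraph.fromEdgeSet {s(a', b')}) P) :
    s(a, b) = s(a', b') := by
  classical
  obtain ⟨P, hP⟩ : ∃ P, IsTriangleFactor (G ⊔ edge a b) P := hTF
  obtain ⟨P', hP'⟩ : ∃ P', IsTriangleFactor (G ⊔ edge a' b') P' := hTF'
  have hE : #(G ⊔ edge a b).edgeFinset + 1 = 4 * #P := by
    rw [G.card_edgeFinset_sup_edge hnadj hab]
    have := hP.card_eq
    omega
  obtain ⟨K, ⟨hK, ha'K⟩, hKuniq⟩ := hP'.2 a'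
  have hrest : ∀ t ∈ P', t ≠ K → G.IsNClique 3 t := fun t ht htK =>
    (hP'.1 t ht).of_sup_edge_of_notMem fun ha't => htK (hKuniq t ⟨ht, ha't⟩)
  have hb'K : b' ∈ K := by
    by_contra hb'K
    refine hnoTF ⟨P', fun t ht => ?_, hP'.2⟩
    by_cases htK : t = K
    · exact htK ▸ (edge_comm a' b' ▸ hP'.1 K hK).of_sup_edge_of_notMem hb'K
    · exact hrest t ht htK
  have hKP : K ∈ P := hP.mem_of_forall_ne_mem hP' hK fun t ht htK =>
    hP.mem_of_isNClique (hconn.mono le_sup_left) hE ((hrest t ht htK).mono le_sup_left)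
  rcases (hP.1 K hKP).1 ha'K hb'K hab' with hG | hab'
  · exact absurd hG hnadj'
  · exact ((adj_edge a b).1 hab').1
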